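/- (Ordering lemma of Rotter–Vygen, dimension 2.) There is a constant C > 0 with the following property. Let V be a finite set with |V| = n ≥ 2, let w : V × V → ℝ≥0 be symmetric with w(v,v) = 0, let dist be a metric on V satisfying the 2-dimensional spreading constraints, and let v₀ ∈ V. Then there exists a bijection q : V → {0, 1, …, n−1} with q(v₀) = 0 such that ∑_{{u,v}} w(u,v) · √(|q(u) − q(v)|) ≤ C · log n · ∑_{{u,v}} w(u,v) · dist(u,v). -/

import Mathlib

/-!
Recursive CKR decomposition. For `|S| > 256` let `Δ = √|S| / 8`, pick a random ordering `σ` of `V`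
and a random radius `β ∈ [Δ/4, Δ/2]`, and send every point to the `σ`-first point within `β`.
A pair at distance `d` is separated with probability `O(d/Δ · log (|B(u, 5Δ/8)| / |B(u, Δ/8)|))`,
so some outcome cuts weight at most `12 Σ w d (1 + log-ratio) / Δ`. The spreading constraints
bound a ball of radius `r` by `16 r² + 1` points, so every cluster has at most `|S|/16 + 1`
points and its scale is at most `Δ/3`. Ordering the clusters recursively and concatenating,
a cut pair is stretched by at most `√|S| = 8Δ`, and the costs of the levels telescope into a
potential of size `O(log n)` per unit of `w d`.
-/

open scoped BigOperators

def IsMetric {V : Type*} (dist : V → V → ℝ) : Prop :=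
  (∀ x, dist x x = 0) ∧ (∀ x y, 0 ≤ dist x y) ∧ (∀ x y, dist x y = dist y x) ∧
  (∀ x y z, dist x z ≤ dist x y + dist y z) ∧ (∀ x y, dist x y = 0 → x = y)

def Spreading2 {V : Type*} (dist : V → V → ℝ) : Prop :=
  ∀ S : Finset V, ∀ u ∈ S,
    ((S.card : ℝ) - 1) ^ ((3 : ℝ) / 2) / 4 ≤ ∑ v ∈ S, dist u v

open Finset Real

section MetricFacts

variable {V : Type*} {dist : V → V → ℝ}

theorem IsMetric.dist_self (hd : IsMetric dist) (x : V) : dist x x = 0 := hd.1 x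

theorem IsMetric.nonneg (hd : IsMetric dist) (x y : V) : 0 ≤ dist x y := hd.2.1 x y

theorem IsMetric.symm (hd : IsMetric dist) (x y : V) : dist x y = dist y x := hd.2.2.1 x y

theorem IsMetric.triangle (hd : IsMetric dist) (x y z : V) : dist x z ≤ dist x y + dist y z :=
  hd.2.2.2.1 x y z

theorem Spreading2.quarter_le_dist [DecidableEq V] (hs : Spreading2 dist)
    (h0 : ∀ x, dist x x = 0) {u v : V} (huv : u ≠ v) : 1 / 4 ≤ dist u v := by
  have h := hs {u, v} u (mem_insert_self u {v})
  rw [sum_pair huv, h0, card_pair huv] at h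
  norm_num at h
  exact h

theorem Spreading2.card_le [DecidableEq V] (hs : Spreading2 dist) (h0 : ∀ x, dist x x = 0)
    {S : Finset V} {u : V} (hu : u ∈ S) {r : ℝ} (hr : ∀ v ∈ S, dist u v ≤ r) :
    (#S : ℝ) ≤ 16 * r ^ 2 + 1 := by
  set t : ℝ := #S - 1 with ht
  have ht0 : 0 ≤ t := by
    have : (1 : ℝ) ≤ #S := by exact_mod_cast card_pos.2 ⟨u, hu⟩
    linarith
  have hsum : ∑ v ∈ S, dist u v ≤ t * r := by
    rw [← add_sum_erase S _ hu, h0, zero_add]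
    calc ∑ v ∈ S.erase u, dist u v ≤ ∑ _v ∈ S.erase u, r :=
          sum_le_sum fun v hv => hr v (mem_of_mem_erase hv)
      _ = t * r := by
          rw [sum_const, card_erase_of_mem hu, nsmul_eq_mul, Nat.cast_pred (card_pos.2 ⟨u, hu⟩)]
  have hcube : t * √t ≤ t * (4 * r) := by
    have h32 : t ^ ((3 : ℝ) / 2) = t * √t := by
      rw [sqrt_eq_rpow, ← rpow_one_add' ht0 (by norm_num)]
      norm_num
    have := hs S u hu
    rw [h32] at this
    linarith
  rcases ht0.eq_or_lt with h | h
  · linarith [sq_nonneg r]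
  · have hsq : √t ≤ 4 * r := le_of_mul_le_mul_left hcube h
    have : t ≤ 16 * r ^ 2 := by
      calc t = √t ^ 2 := (sq_sqrt ht0).symm
        _ ≤ (4 * r) ^ 2 := pow_le_pow_left₀ (sqrt_nonneg t) hsq 2
        _ = 16 * r ^ 2 := by ring
    linarith

end MetricFacts

theorem List.exists_idxOf_flatten_eq_add {α : Type*} [DecidableEq α] {Bs : List (List α)}
    (h : Bs.Pairwise List.Disjoint) {B : List α} (hB : B ∈ Bs) :
    ∃ c, ∀ x ∈ B, Bs.flatten.idxOf x = c + B.idxOf x := by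
  induction Bs with
  | nil => simp at hB
  | cons B₀ Bs ih =>
    rw [List.pairwise_cons] at h
    rcases List.mem_cons.1 hB with rfl | hB
    · exact ⟨0, fun x hx => by rw [List.flatten_cons, List.idxOf_append_of_mem hx, zero_add]⟩
    · obtain ⟨c, hc⟩ := ih h.2 hB
      refine ⟨B₀.length + c, fun x hx => ?_⟩
      rw [List.flatten_cons, List.idxOf_append_of_notMem fun h₀ => h.1 B hB h₀ hx, hc x hx,
        add_assoc]

theorem List.abs_idxOf_sub_idxOf_le {α : Type*} [DecidableEq α] {L : List α} {u v : α}
    (hu : u ∈ L) (hv : v ∈ L) : |(L.idxOf u : ℝ) - L.idxOf v| ≤ L.length := by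
  have hu' : (L.idxOf u : ℝ) < L.length := by exact_mod_cast List.idxOf_lt_length_iff.2 hu
  have hv' : (L.idxOf v : ℝ) < L.length := by exact_mod_cast List.idxOf_lt_length_iff.2 hv
  rw [abs_le]
  constructor <;> linarith [(Nat.cast_nonneg (L.idxOf u) : (0 : ℝ) ≤ _),
    (Nat.cast_nonneg (L.idxOf v) : (0 : ℝ) ≤ _)]

namespace RotterVygen

section Balls

variable {V : Type*} [Fintype V]

variable (dist : V → V → ℝ)

noncomputable def ballCard (u : V) (r : ℝ) : ℕ := #{y | dist u y ≤ r}

variable {dist}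

theorem one_le_ballCard {u : V} (h0 : dist u u = 0) {r : ℝ} (hr : 0 ≤ r) :
    1 ≤ ballCard dist u r :=
  card_pos.2 ⟨u, by simp [h0, hr]⟩

theorem ballCard_mono (u : V) {r r' : ℝ} (h : r ≤ r') : ballCard dist u r ≤ ballCard dist u r' :=
  card_le_card fun y hy => by
    simp only [mem_filter, mem_univ, true_and] at hy ⊢
    exact hy.trans h

theorem ballCard_le_card (u : V) (r : ℝ) : ballCard dist u r ≤ Fintype.card V :=
  card_filter_le _ _

theorem log_ballCard_nonneg {u : V} (h0 : dist u u = 0) {r : ℝ} (hr : 0 ≤ r) :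
    0 ≤ log (ballCard dist u r) :=
  log_nonneg (by exact_mod_cast one_le_ballCard h0 hr)

theorem log_ballCard_mono {u : V} (h0 : dist u u = 0) {r r' : ℝ} (hr : 0 ≤ r) (h : r ≤ r') :
    log (ballCard dist u r) ≤ log (ballCard dist u r') :=
  log_le_log (by exact_mod_cast one_le_ballCard h0 hr) (by exact_mod_cast ballCard_mono u h)

theorem ballCard_le [DecidableEq V] (hs : Spreading2 dist) (h0 : ∀ x, dist x x = 0)
    (u : V) {r : ℝ} (hr : 0 ≤ r) : (ballCard dist u r : ℝ) ≤ 16 * r ^ 2 + 1 :=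
  hs.card_le h0 (u := u) (by simp [h0, hr]) fun v hv => by simpa using hv

end Balls

section Potential

variable {V : Type*} [Fintype V] {dist : V → V → ℝ}

variable (dist) in
/-- The CKR decomposition at scale `Δ` separates `u` from `v` with probability at most
`12 d(u, v) levelCost u Δ / Δ` (`card_cut_mul_le`). -/
noncomputable def levelCost (u : V) (Δ : ℝ) : ℝ :=
  1 + log (ballCard dist u (5 * Δ / 8)) - log (ballCard dist u (Δ / 8))

theorem one_le_levelCost {u : V} (h0 : dist u u = 0) {Δ : ℝ} (hΔ : 0 ≤ Δ) :
    1 ≤ levelCost dist u Δ := by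
  have := log_ballCard_mono h0 (by positivity : 0 ≤ Δ / 8) (by linarith : Δ / 8 ≤ 5 * Δ / 8)
  unfold levelCost
  linarith

variable (dist) in
/-- The budget of a point `u` at scale `Δ`: one unit for each of the `log₂ Δ` levels of the
recursion, plus the logarithms of two ball sizes that pay for the telescoping `levelCost`s. -/
noncomputable def potential (u : V) (Δ : ℝ) : ℝ :=
  1 + max 0 (logb 2 Δ) + log (ballCard dist u (5 * Δ / 8)) + log (ballCard dist u (Δ / 4))

theorem one_le_potential {u : V} (h0 : dist u u = 0) {Δ : ℝ} (hΔ : 0 ≤ Δ) :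
    1 ≤ potential dist u Δ := by
  have h₁ := log_ballCard_nonneg h0 (by positivity : 0 ≤ 5 * Δ / 8)
  have h₂ := log_ballCard_nonneg h0 (by positivity : 0 ≤ Δ / 4)
  have h₃ := le_max_left 0 (logb 2 Δ)
  unfold potential
  linarith

theorem one_add_max_logb_le {Δ Δ' : ℝ} (hΔ : 2 ≤ Δ) (hΔ'0 : 0 ≤ Δ') (hΔ' : Δ' ≤ Δ / 2) :
    1 + max 0 (logb 2 Δ') ≤ max 0 (logb 2 Δ) := by
  have h₁ : 1 ≤ logb 2 Δ := by
    rw [← logb_self_eq_one one_lt_two]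
    exact logb_le_logb_of_le one_lt_two two_pos hΔ
  have h₂ : logb 2 Δ' ≤ logb 2 Δ - 1 := by
    rcases hΔ'0.eq_or_lt with rfl | hpos
    · simpa using h₁
    · calc logb 2 Δ' ≤ logb 2 (Δ / 2) := logb_le_logb_of_le one_lt_two hpos hΔ'
        _ = logb 2 Δ - 1 := by
          rw [logb_div (by linarith) two_ne_zero, logb_self_eq_one one_lt_two]
  rw [max_eq_right (by linarith : 0 ≤ logb 2 Δ)]
  linarith [max_le (by linarith : 0 ≤ logb 2 Δ - 1) h₂]

/-- At a third of the scale, the radii `5Δ'/8` and `Δ'/4` of `potential` fall below `Δ/4` and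
`Δ/8`, so the logarithms telescope against `levelCost`. -/
theorem levelCost_add_potential_le {u : V} (h0 : dist u u = 0) {Δ Δ' : ℝ} (hΔ : 2 ≤ Δ)
    (hΔ'0 : 0 ≤ Δ') (hΔ' : Δ' ≤ Δ / 3) :
    levelCost dist u Δ + potential dist u Δ' ≤ potential dist u Δ := by
  have h₁ := one_add_max_logb_le hΔ hΔ'0 (by linarith)
  have h₂ := log_ballCard_mono h0 (r := 5 * Δ' / 8) (r' := Δ / 4) (by positivity) (by linarith)
  have h₃ := log_ballCard_mono h0 (r := Δ' / 4) (r' := Δ / 8) (by positivity) (by linarith)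
  unfold levelCost potential
  linarith

theorem potential_le_log_card {u : V} (h0 : dist u u = 0) (hn : 2 ≤ Fintype.card V) :
    potential dist u (√(Fintype.card V) / 8) ≤ 5 * log (Fintype.card V) := by
  set n : ℝ := (Fintype.card V : ℝ)
  have hn2 : (2 : ℝ) ≤ n := show (2 : ℝ) ≤ (Fintype.card V : ℝ) by exact_mod_cast hn
  have hlog2 : 1 / 2 < log 2 := by linarith [log_two_gt_d9]
  have hlogn : log 2 ≤ log n := log_le_log two_pos hn2
  have hball : ∀ r, 0 ≤ r → log (ballCard dist u r) ≤ log n := fun r hr =>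
    log_le_log (by exact_mod_cast one_le_ballCard h0 hr)
      (show _ ≤ (Fintype.card V : ℝ) by exact_mod_cast ballCard_le_card u r)
  have hlevels : max 0 (logb 2 (√n / 8)) ≤ log n := by
    refine max_le (by linarith) ?_
    have : log (√n / 8) ≤ log n / 2 := by
      rw [← log_sqrt (by linarith)]
      exact log_le_log (by positivity) (by linarith [sqrt_nonneg n])
    rw [logb, div_le_iff₀ (by linarith)]
    nlinarith
  have h₁ := hball (5 * (√n / 8) / 8) (by positivity)
  have h₂ := hball (√n / 8 / 4) (by positivity)
  unfold potential
  linarith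

theorem sum_mul_potential_le {w : V → V → ℝ} (hd : IsMetric dist) (hw : ∀ u v, 0 ≤ w u v)
    (hn : 2 ≤ Fintype.card V) :
    ∑ u, ∑ v, w u v * dist u v * potential dist u (√(Fintype.card V : ℝ) / 8) ≤
      5 * log (Fintype.card V) * ∑ u, ∑ v, w u v * dist u v := by
  rw [mul_sum]
  refine sum_le_sum fun u _ => ?_
  rw [mul_sum]
  refine sum_le_sum fun v _ => ?_
  rw [mul_comm (5 * _)]
  exact mul_le_mul_of_nonneg_left (potential_le_log_card (hd.dist_self u) hn)
    (mul_nonneg (hw u v) (hd.nonneg u v))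

end Potential

section FirstIn

variable {V ι : Type*} [LinearOrder ι] (σ : V ≃ ι)

noncomputable def firstIn (s : Finset V) (x : V) : V :=
  if h : s.Nonempty then σ.symm ((s.image σ).min' (h.image σ)) else x

variable {σ} {s : Finset V} {x y : V}

theorem firstIn_mem (hy : y ∈ s) : firstIn σ s x ∈ s := by
  have h : s.Nonempty := ⟨y, hy⟩
  obtain ⟨z, hz, hzm⟩ := mem_image.1 ((s.image σ).min'_mem (h.image σ))
  rw [firstIn, dif_pos h, ← hzm, Equiv.symm_apply_apply]
  exact hz

theorem apply_firstIn_le (hy : y ∈ s) : σ (firstIn σ s x) ≤ σ y := by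
  rw [firstIn, dif_pos ⟨y, hy⟩, Equiv.apply_symm_apply]
  exact min'_le _ _ (mem_image_of_mem σ hy)

theorem firstIn_eq (hy : y ∈ s) (hmin : ∀ z ∈ s, σ y ≤ σ z) : firstIn σ s x = y :=
  σ.injective ((apply_firstIn_le hy).antisymm (hmin _ (firstIn_mem hy)))

end FirstIn

section PairDist

variable {V : Type*}

def pairDist (dist : V → V → ℝ) (u v y : V) : ℝ := min (dist u y) (dist v y)

theorem max_le_pairDist_add {dist : V → V → ℝ} (hd : IsMetric dist) (u v y : V) :
    max (dist u y) (dist v y) ≤ pairDist dist u v y + dist u v := by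
  have h₁ := hd.triangle u v y
  have h₂ := hd.triangle v u y
  rw [hd.symm v u] at h₂
  simp only [pairDist]
  rcases le_total (dist u y) (dist v y) with h | h <;>
    simp only [min_eq_left, min_eq_right, h, max_le_iff] <;> constructor <;>
      linarith [hd.nonneg u v]

end PairDist

section Center

variable {V : Type*} [Fintype V] (dist : V → V → ℝ)

noncomputable def center (σ : V ≃ Fin (Fintype.card V)) (β : ℝ) (x : V) : V :=
  firstIn σ {y | dist x y ≤ β} x

variable {dist} {σ : V ≃ Fin (Fintype.card V)} {β : ℝ}

theorem dist_center_le {x : V} (hx : dist x x ≤ β) : dist x (center dist σ β x) ≤ β := by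
  simpa [center] using firstIn_mem (σ := σ) (x := x) (s := {y | dist x y ≤ β}) (by simpa using hx)

/-- Two points are separated only if the first point touching their balls
lies in one ball but not in the other. -/
theorem center_eq_center_of_max_le {u v : V}
    (h : max (dist u (firstIn σ {y | pairDist dist u v y ≤ β} u))
      (dist v (firstIn σ {y | pairDist dist u v y ≤ β} u)) ≤ β) :
    center dist σ β u = center dist σ β v := by
  set y := firstIn σ {y | pairDist dist u v y ≤ β} u
  have hmin : ∀ z, pairDist dist u v z ≤ β → σ y ≤ σ z := fun z hz =>
    apply_firstIn_le (by simpa using hz)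
  have hu : center dist σ β u = y :=
    firstIn_eq (by simpa using (le_max_left _ _).trans h)
      fun z hz => hmin z ((min_le_left _ _).trans (by simpa using hz))
  have hv : center dist σ β v = y :=
    firstIn_eq (by simpa using (le_max_right _ _).trans h)
      fun z hz => hmin z ((min_le_right _ _).trans (by simpa using hz))
  rw [hu, hv]

end Center

section Counting

variable {α β : Type*} [Fintype α] [DecidableEq α] [Fintype β] [DecidableEq β] [LinearOrder β]

/-- Each point of `T` is the `σ`-first point of `T` for the same number of bijections `σ`. -/
theorem card_mul_card_first_le {T : Finset α} {y : α} (hy : y ∈ T) :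
    #T * #{σ : α ≃ β | ∀ z ∈ T, z ≠ y → σ y < σ z} ≤ Fintype.card (α ≃ β) := by
  set F : α → Finset (α ≃ β) := fun y => {σ | ∀ z ∈ T, z ≠ y → σ y < σ z}
  have hswap : ∀ y' ∈ T, #(F y) ≤ #(F y') := by
    intro y' hy'
    refine card_le_card_of_injOn (fun σ => (Equiv.swap y y').trans σ) (fun σ hσ => ?_)
      fun σ₁ _ σ₂ _ h => Equiv.ext fun x => by simpa using Equiv.congr_fun h (Equiv.swap y y' x)
    simp only [F, coe_filter, mem_univ, true_and, Set.mem_ofPred_eq] at hσ ⊢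
    intro z hz hzy'
    simp only [Equiv.trans_apply, Equiv.swap_apply_right]
    by_cases hzy : z = y
    · subst hzy
      rw [Equiv.swap_apply_left]
      exact hσ y' hy' (Ne.symm hzy')
    · rw [Equiv.swap_apply_of_ne_of_ne hzy hzy']
      exact hσ z hz hzy
  have hdisj : (T : Set α).PairwiseDisjoint F := by
    intro y₁ h₁ y₂ h₂ hne
    refine disjoint_left.2 fun σ hσ₁ hσ₂ => ?_
    simp only [F, mem_filter, mem_univ, true_and] at hσ₁ hσ₂
    exact (hσ₁ y₂ h₂ hne.symm).not_gt (hσ₂ y₁ h₁ hne)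
  calc #T * #(F y) = ∑ _y' ∈ T, #(F y) := by rw [sum_const, smul_eq_mul]
    _ ≤ ∑ y' ∈ T, #(F y') := sum_le_sum hswap
    _ = #(T.biUnion F) := (card_biUnion hdisj).symm
    _ ≤ Fintype.card (α ≃ β) := card_le_univ _

theorem inv_succ_le_log_succ_sub_log {k : ℝ} (hk : 0 < k) : 1 / (k + 1) ≤ log (k + 1) - log k := by
  have h := one_sub_inv_le_log_of_pos (div_pos (by linarith : 0 < k + 1) hk)
  rw [log_div (by linarith) hk.ne', inv_div] at h
  calc 1 / (k + 1) = 1 - k / (k + 1) := by field_simp; ring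
    _ ≤ _ := h

/-- Adding the points of `T` in increasing order of `g`, the `k`-th one has rank at least
`#{z | g z ≤ a} + k`, and `1 / (m + 1) ≤ log (m + 1) - log m`. -/
theorem sum_inv_card_le_log (g : α → ℝ) {a : ℝ} (hA : 0 < #{z | g z ≤ a}) {T : Finset α}
    (hT : ∀ y ∈ T, a < g y) :
    ∑ y ∈ T, (1 : ℝ) / #{z | g z ≤ g y} ≤ log (#{z | g z ≤ a} + #T) - log #{z | g z ≤ a} := by
  set A : Finset α := {z | g z ≤ a}
  induction T using Finset.induction_on_max_value g with
  | empty => simp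
  | insert y T hyT hmax ih =>
    have hT' : ∀ x ∈ T, a < g x := fun x hx => hT x (mem_insert_of_mem hx)
    have hdisj : Disjoint A (insert y T) := disjoint_left.2 fun z hz hzT => by
      simp only [A, mem_filter, mem_univ, true_and] at hz
      exact (hT z hzT).not_ge hz
    have hsub : A ∪ insert y T ⊆ ({z | g z ≤ g y} : Finset α) := fun z hz => by
      rcases mem_union.1 hz with hz | hz
      · simp only [A, mem_filter, mem_univ, true_and] at hz ⊢
        exact hz.trans (hT y (mem_insert_self y T)).le
      · rcases mem_insert.1 hz with rfl | hz
        · simp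
        · simpa using hmax z hz
    have hcard : (#A + #T + 1 : ℝ) ≤ #{z | g z ≤ g y} := by
      have := card_le_card hsub
      rw [card_union_of_disjoint hdisj, card_insert_of_notMem hyT] at this
      exact_mod_cast this
    have hpos : (0 : ℝ) < #A + #T := by positivity
    rw [sum_insert hyT, card_insert_of_notMem hyT, Nat.cast_succ, ← add_assoc]
    have := inv_succ_le_log_succ_sub_log hpos
    have := one_div_le_one_div_of_le (by positivity) hcard
    linarith [ih hT']

theorem card_window_le (M : ℕ) (a : ℝ) {ℓ : ℝ} (hℓ : 0 ≤ ℓ) :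
    (#{j : Fin M | a ≤ (j : ℝ) / 8 ∧ (j : ℝ) / 8 < a + ℓ} : ℝ) ≤ 8 * ℓ + 1 := by
  have hsub : #{j : Fin M | a ≤ (j : ℝ) / 8 ∧ (j : ℝ) / 8 < a + ℓ} ≤
      #(Ico ⌈8 * a⌉₊ ⌈8 * a + 8 * ℓ⌉₊) := by
    refine card_le_card_of_injOn (fun j => (j : ℕ)) (fun j hj => ?_) Fin.val_injective.injOn
    simp only [coe_filter, mem_univ, true_and, Set.mem_ofPred_eq] at hj
    simp only [coe_Ico, Set.mem_Ico]
    exact ⟨Nat.ceil_le.2 (by linarith), Nat.lt_ceil.2 (by linarith)⟩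
  have hceil : ⌈8 * a + 8 * ℓ⌉₊ - ⌈8 * a⌉₊ ≤ ⌈8 * ℓ⌉₊ := by
    have := Nat.ceil_add_le (8 * a) (8 * ℓ)
    omega
  rw [Nat.card_Ico] at hsub
  calc (#{j : Fin M | a ≤ (j : ℝ) / 8 ∧ (j : ℝ) / 8 < a + ℓ} : ℝ) ≤ ⌈8 * ℓ⌉₊ := by
        exact_mod_cast hsub.trans hceil
    _ ≤ 8 * ℓ + 1 := (Nat.ceil_lt_add_one (by positivity)).le

end Counting

section Decomposition

variable {V : Type*} [Fintype V] [DecidableEq V] {dist : V → V → ℝ}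

variable (dist) in
/-- The Calinescu–Karloff–Rabani decomposition at scale `Δ`; the uniformly random choice `ω` is an
ordering of `V` and one of the radii `Δ/4 + j/8`, `j < M`. -/
noncomputable def ckrCenter (Δ : ℝ) {M : ℕ} (ω : (V ≃ Fin (Fintype.card V)) × Fin M) (x : V) : V :=
  center dist ω.1 (Δ / 4 + (ω.2 : ℝ) / 8) x

theorem ckrRadius_le {Δ : ℝ} {M : ℕ} (hM : (M : ℝ) ≤ 2 * Δ + 1) (j : Fin M) :
    Δ / 4 + (j : ℝ) / 8 ≤ Δ / 2 := by
  have : (j : ℝ) + 1 ≤ M := by exact_mod_cast j.isLt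
  linarith

/-- If `(σ, j)` separates `u` and `v`, the `σ`-first point `y` with `pairDist y ≤ β` is within `β`
of only one of them. So `y` lies in the annulus, comes `σ`-first among the points at most
`pairDist y` from `{u, v}`, and `β ∈ [pairDist y, pairDist y + d(u, v))`. -/
theorem cut_subset (hd : IsMetric dist) {u v : V} {Δ : ℝ} (hΔ : 0 ≤ Δ) {M : ℕ}
    (hM : (M : ℝ) ≤ 2 * Δ + 1) :
    ({ω | ckrCenter dist Δ ω u ≠ ckrCenter dist Δ ω v} :
        Finset ((V ≃ Fin (Fintype.card V)) × Fin M)) ⊆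
      ({y | Δ / 4 - dist u v < pairDist dist u v y ∧ pairDist dist u v y ≤ Δ / 2} :
          Finset V).biUnion fun y =>
        ({σ | ∀ z ∈ ({z | pairDist dist u v z ≤ pairDist dist u v y} : Finset V),
            z ≠ y → σ y < σ z} : Finset _) ×ˢ
        ({j : Fin M | pairDist dist u v y - Δ / 4 ≤ (j : ℝ) / 8 ∧
            (j : ℝ) / 8 < pairDist dist u v y - Δ / 4 + dist u v} : Finset _) := by
  rintro ⟨σ, j⟩ hω
  rw [mem_filter] at hω
  set β := Δ / 4 + (j : ℝ) / 8 with hβ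
  set y := firstIn σ {y | pairDist dist u v y ≤ β} u
  have hβ0 : 0 ≤ β := by positivity
  have hy : pairDist dist u v y ≤ β := by
    have hu : pairDist dist u v u ≤ β :=
      (min_le_left _ _).trans (by rw [hd.dist_self]; exact hβ0)
    simpa using firstIn_mem (σ := σ) (x := u) (s := {y | pairDist dist u v y ≤ β})
      (by simpa using hu)
  have hsep : β < pairDist dist u v y + dist u v :=
    (lt_of_not_ge fun h => hω.2 (center_eq_center_of_max_le h)).trans_le
      (max_le_pairDist_add hd u v y)
  have hβΔ : β ≤ Δ / 2 := ckrRadius_le hM j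
  have hj : (0 : ℝ) ≤ (j : ℝ) / 8 := by positivity
  simp only [mem_biUnion, mem_product, mem_filter, mem_univ, true_and]
  refine ⟨y, ⟨by linarith, by linarith⟩, fun z hz hzy => ?_, by linarith, by linarith⟩
  exact (apply_firstIn_le (by simpa using hz.trans hy)).lt_of_ne fun h => hzy (σ.injective h).symm

theorem sum_inv_card_annulus_le (hd : IsMetric dist) {u v : V} {Δ : ℝ} (hdΔ : dist u v ≤ Δ / 8) :
    ∑ y ∈ ({y | Δ / 4 - dist u v < pairDist dist u v y ∧ pairDist dist u v y ≤ Δ / 2} : Finset V),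
        (1 : ℝ) / #{z | pairDist dist u v z ≤ pairDist dist u v y} ≤
      log (ballCard dist u (5 * Δ / 8)) - log (ballCard dist u (Δ / 8)) := by
  set g := pairDist dist u v
  set A : Finset V := {z | g z ≤ Δ / 4 - dist u v} with hAdef
  set R : Finset V := {y | Δ / 4 - dist u v < g y ∧ g y ≤ Δ / 2}
  have hball : ∀ y, dist u y ≤ g y + dist u v := fun y =>
    (le_max_left _ _).trans (max_le_pairDist_add hd u v y)
  have hinner : ballCard dist u (Δ / 8) ≤ #A := card_le_card fun z hz => by
    simp only [hAdef, mem_filter, mem_univ, true_and] at hz ⊢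
    exact (min_le_left _ _).trans (by linarith : dist u z ≤ Δ / 4 - dist u v)
  have hΔ : 0 ≤ Δ / 8 := (hd.nonneg u v).trans hdΔ
  have hA : 0 < #A := (one_le_ballCard (hd.dist_self u) hΔ).trans hinner
  have houter : #A + #R ≤ ballCard dist u (5 * Δ / 8) := by
    rw [← card_union_of_disjoint (disjoint_filter.2 fun y _ h₁ h₂ => by linarith [h₂.1])]
    refine card_le_card fun y hy => ?_
    simp only [mem_union, mem_filter, mem_univ, true_and] at hy ⊢
    have := hball y
    rcases hy with h | ⟨-, h⟩ <;> linarith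
  calc _ ≤ log (#A + #R) - log #A := sum_inv_card_le_log g hA fun y hy => (mem_filter.1 hy).2.1
    _ ≤ _ := by
      gcongr
      · exact_mod_cast houter
      · exact_mod_cast one_le_ballCard (hd.dist_self u) hΔ

theorem card_cut_le (hd : IsMetric dist) {u v : V} (huv : 1 / 4 ≤ dist u v) {Δ : ℝ}
    (hdΔ : dist u v ≤ Δ / 8) {M : ℕ} (hM : (M : ℝ) ≤ 2 * Δ + 1) :
    (#{ω : (V ≃ Fin (Fintype.card V)) × Fin M | ckrCenter dist Δ ω u ≠ ckrCenter dist Δ ω v} : ℝ) ≤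
      Fintype.card (V ≃ Fin (Fintype.card V)) * (12 * dist u v) *
        (log (ballCard dist u (5 * Δ / 8)) - log (ballCard dist u (Δ / 8))) := by
  set g := pairDist dist u v
  set N := Fintype.card (V ≃ Fin (Fintype.card V))
  have hfirst : ∀ y, (#{σ : V ≃ Fin (Fintype.card V) | ∀ z ∈ ({z | g z ≤ g y} : Finset V),
      z ≠ y → σ y < σ z} : ℝ) ≤ N * (1 / #{z | g z ≤ g y}) := by
    intro y
    have hT : 0 < #({z | g z ≤ g y} : Finset V) := card_pos.2 ⟨y, by simp⟩
    rw [mul_one_div, le_div_iff₀ (by exact_mod_cast hT), mul_comm]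
    exact_mod_cast card_mul_card_first_le (by simp)
  have hwindow : ∀ y, (#{j : Fin M | g y - Δ / 4 ≤ (j : ℝ) / 8 ∧
      (j : ℝ) / 8 < g y - Δ / 4 + dist u v} : ℝ) ≤ 12 * dist u v := fun y =>
    (card_window_le M _ (hd.nonneg u v)).trans (by linarith)
  calc _ ≤ (#(({y | Δ / 4 - dist u v < g y ∧ g y ≤ Δ / 2} : Finset V).biUnion _) : ℝ) := by
        exact_mod_cast card_le_card (cut_subset hd (by linarith) hM)
    _ ≤ ∑ y ∈ ({y | Δ / 4 - dist u v < g y ∧ g y ≤ Δ / 2} : Finset V),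
          N * (1 / #{z | g z ≤ g y}) * (12 * dist u v) := by
        refine (Nat.cast_le.2 card_biUnion_le).trans ?_
        push_cast
        refine sum_le_sum fun y _ => ?_
        rw [card_product, Nat.cast_mul]
        exact mul_le_mul (hfirst y) (hwindow y) (by positivity) (by positivity)
    _ = N * (12 * dist u v) * ∑ y ∈ ({y | Δ / 4 - dist u v < g y ∧ g y ≤ Δ / 2} : Finset V),
          1 / (#{z | g z ≤ g y} : ℝ) := by
        rw [mul_sum]; exact sum_congr rfl fun _ _ => by ring
    _ ≤ _ := mul_le_mul_of_nonneg_left (sum_inv_card_annulus_le hd hdΔ)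
        (mul_nonneg (Nat.cast_nonneg _) (mul_nonneg (by norm_num) (hd.nonneg u v)))

end Decomposition

section CutWeight

variable {V : Type*} [DecidableEq V]

def cutWeight (w : V → V → ℝ) (S : Finset V) (ctr : V → V) : ℝ :=
  ∑ u ∈ S, ∑ v ∈ S, if ctr u = ctr v then 0 else w u v

theorem sum_cutWeight {ι : Type*} (Ω : Finset ι) (w : V → V → ℝ) (S : Finset V)
    (ctr : ι → V → V) :
    ∑ ω ∈ Ω, cutWeight w S (ctr ω) =
      ∑ u ∈ S, ∑ v ∈ S, (#{ω ∈ Ω | ctr ω u ≠ ctr ω v} : ℝ) * w u v := by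
  unfold cutWeight
  rw [sum_comm]
  refine sum_congr rfl fun u _ => ?_
  rw [sum_comm]
  refine sum_congr rfl fun v _ => ?_
  simp_rw [← ite_not (ctr _ u = ctr _ v), ← sum_filter, sum_const, nsmul_eq_mul]

end CutWeight

section Clustering

variable {V : Type*} [Fintype V] [DecidableEq V] {dist : V → V → ℝ}

theorem card_cut_mul_le (hd : IsMetric dist) (hsep : ∀ u v, u ≠ v → 1 / 4 ≤ dist u v)
    (u v : V) {Δ : ℝ} (hΔ : 0 < Δ) :
    (#{ω : (V ≃ Fin (Fintype.card V)) × Fin ⌈Δ⌉₊ |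
        ckrCenter dist Δ ω u ≠ ckrCenter dist Δ ω v} : ℝ) * Δ ≤
      Fintype.card ((V ≃ Fin (Fintype.card V)) × Fin ⌈Δ⌉₊) *
        (12 * dist u v * levelCost dist u Δ) := by
  rcases eq_or_ne u v with rfl | huv
  · simp [hd.dist_self]
  set K : ℝ := (#{ω : (V ≃ Fin (Fintype.card V)) × Fin ⌈Δ⌉₊ |
    ckrCenter dist Δ ω u ≠ ckrCenter dist Δ ω v} : ℝ)
  set N : ℝ := (Fintype.card (V ≃ Fin (Fintype.card V)) : ℝ)
  have hΩ : (Fintype.card ((V ≃ Fin (Fintype.card V)) × Fin ⌈Δ⌉₊) : ℝ) = N * ⌈Δ⌉₊ := by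
    rw [Fintype.card_prod, Fintype.card_fin, Nat.cast_mul]
  have hd0 := hd.nonneg u v
  have hΔM : Δ ≤ ⌈Δ⌉₊ := Nat.le_ceil Δ
  have hL := one_le_levelCost (hd.dist_self u) hΔ.le
  rw [hΩ]
  rcases le_or_gt (dist u v) (Δ / 8) with hnear | hfar
  · have hcut := card_cut_le hd (hsep u v huv) hnear (M := ⌈Δ⌉₊)
      (by linarith [Nat.ceil_lt_add_one hΔ.le])
    rw [show log (ballCard dist u (5 * Δ / 8)) - log (ballCard dist u (Δ / 8)) =
      levelCost dist u Δ - 1 by unfold levelCost; ring] at hcut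
    calc K * Δ ≤ N * (12 * dist u v) * (levelCost dist u Δ - 1) * Δ :=
          mul_le_mul_of_nonneg_right hcut hΔ.le
      _ ≤ N * (12 * dist u v) * (levelCost dist u Δ * ⌈Δ⌉₊) := by
          rw [mul_assoc]
          exact mul_le_mul_of_nonneg_left (by nlinarith) (by positivity)
      _ = _ := by ring
  · have hcut : K ≤ N * ⌈Δ⌉₊ := hΩ ▸ Nat.cast_le.2 (card_le_univ _)
    calc K * Δ ≤ N * ⌈Δ⌉₊ * Δ := mul_le_mul_of_nonneg_right hcut hΔ.le
      _ ≤ _ := mul_le_mul_of_nonneg_left (by nlinarith) (by positivity)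

/-- Some outcome of the random decomposition does at least as well as the average. -/
theorem exists_clustering (hd : IsMetric dist) (hsep : ∀ u v, u ≠ v → 1 / 4 ≤ dist u v)
    {w : V → V → ℝ} (hw : ∀ u v, 0 ≤ w u v) (S : Finset V) {Δ : ℝ} (hΔ : 0 < Δ) :
    ∃ ctr : V → V, (∀ x, dist x (ctr x) ≤ Δ / 2) ∧
      cutWeight w S ctr * Δ ≤ 12 * ∑ u ∈ S, ∑ v ∈ S, w u v * dist u v * levelCost dist u Δ := by
  set Ω := (univ : Finset ((V ≃ Fin (Fintype.card V)) × Fin ⌈Δ⌉₊))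
  have hΩ : Ω.Nonempty := univ_nonempty_iff.2 ⟨(Fintype.equivFin V, ⟨0, Nat.ceil_pos.2 hΔ⟩)⟩
  have havg : ∑ ω ∈ Ω, cutWeight w S (ckrCenter dist Δ ω) * Δ ≤
      ∑ _ω ∈ Ω, 12 * ∑ u ∈ S, ∑ v ∈ S, w u v * dist u v * levelCost dist u Δ := by
    rw [← sum_mul, sum_cutWeight, sum_const, card_univ, nsmul_eq_mul, sum_mul, mul_sum, mul_sum]
    refine sum_le_sum fun u _ => ?_
    rw [sum_mul, mul_sum, mul_sum]
    refine sum_le_sum fun v _ => ?_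
    have := mul_le_mul_of_nonneg_left (card_cut_mul_le hd hsep u v hΔ) (hw u v)
    linear_combination this
  obtain ⟨ω, -, hω⟩ := exists_le_of_sum_le hΩ havg
  refine ⟨ckrCenter dist Δ ω, fun x => ?_, hω⟩
  have hM : (⌈Δ⌉₊ : ℝ) ≤ 2 * Δ + 1 := by linarith [Nat.ceil_lt_add_one hΔ.le]
  exact (dist_center_le (by rw [hd.dist_self]; positivity)).trans (ckrRadius_le hM ω.2)

end Clustering

section Arrangement

variable {V : Type*} [DecidableEq V]

theorem exists_nodup_toFinset_head {S : Finset V} {a : V} (ha : a ∈ S) :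
    ∃ L : List V, (L.Nodup ∧ L.toFinset = S) ∧ L.head? = some a :=
  ⟨a :: (S.erase a).toList, ⟨by simp [Finset.nodup_toList], by simp [insert_erase ha]⟩, rfl⟩

theorem sum_sum_ite_eq_sum_fiber (S : Finset V) (ctr : V → V) (f : V → V → ℝ) :
    ∑ u ∈ S, ∑ v ∈ S, (if ctr u = ctr v then f u v else 0) =
      ∑ c ∈ S.image ctr, ∑ u ∈ {x ∈ S | ctr x = c}, ∑ v ∈ {x ∈ S | ctr x = c}, f u v := by
  rw [← sum_fiberwise_of_maps_to (fun x hx => mem_image_of_mem ctr hx)]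
  refine sum_congr rfl fun c _ => sum_congr rfl fun u hu => ?_
  rw [sum_filter, (mem_filter.1 hu).2]
  simp_rw [eq_comm (a := c)]

theorem sum_fiber_le (S : Finset V) (ctr : V → V) {f : V → V → ℝ} (hf : ∀ u v, 0 ≤ f u v) :
    ∑ c ∈ S.image ctr, ∑ u ∈ {x ∈ S | ctr x = c}, ∑ v ∈ {x ∈ S | ctr x = c}, f u v ≤
      ∑ u ∈ S, ∑ v ∈ S, f u v := by
  rw [← sum_sum_ite_eq_sum_fiber]
  gcongr with u _ v _
  split_ifs
  exacts [le_rfl, hf u v]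

variable (w : V → V → ℝ) in
noncomputable def stretch (S : Finset V) (L : List V) : ℝ :=
  ∑ u ∈ S, ∑ v ∈ S, w u v * √|(L.idxOf u : ℝ) - L.idxOf v|

variable {w : V → V → ℝ} {S : Finset V} {ctr : V → V} {keys : List V} {Lc : V → List V}

theorem pairwise_disjoint_map (hkeys : keys.Nodup)
    (hLc : ∀ c ∈ keys, (Lc c).toFinset = {x ∈ S | ctr x = c}) :
    (keys.map Lc).Pairwise List.Disjoint := by
  rw [List.pairwise_map]
  refine hkeys.imp_of_mem fun {c c'} hc hc' hne x hx hx' => hne ?_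
  have h := hLc c hc ▸ List.mem_toFinset.2 hx
  have h' := hLc c' hc' ▸ List.mem_toFinset.2 hx'
  exact (mem_filter.1 h).2.symm.trans (mem_filter.1 h').2

theorem nodup_toFinset_flatten_map (hkeys : keys.Nodup) (hkS : keys.toFinset = S.image ctr)
    (hLc : ∀ c ∈ keys, (Lc c).Nodup ∧ (Lc c).toFinset = {x ∈ S | ctr x = c}) :
    (keys.map Lc).flatten.Nodup ∧ (keys.map Lc).flatten.toFinset = S := by
  refine ⟨List.nodup_flatten.2 ⟨fun l hl => ?_,
    pairwise_disjoint_map hkeys fun c hc => (hLc c hc).2⟩, ?_⟩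
  · obtain ⟨c, hc, rfl⟩ := List.mem_map.1 hl
    exact (hLc c hc).1
  · ext x
    simp only [List.mem_toFinset, List.mem_flatten, List.mem_map]
    constructor
    · rintro ⟨_, ⟨c, hc, rfl⟩, hx⟩
      exact (mem_filter.1 ((hLc c hc).2 ▸ List.mem_toFinset.2 hx)).1
    · intro hx
      have hc : ctr x ∈ keys := List.mem_toFinset.1 (hkS ▸ mem_image_of_mem ctr hx)
      exact ⟨_, ⟨ctr x, hc, rfl⟩, List.mem_toFinset.1 ((hLc _ hc).2 ▸ (by simp [hx]))⟩

theorem exists_keys_head_flatten {a : V} (ha : a ∈ S) (hhead : (Lc (ctr a)).head? = some a) :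
    ∃ keys : List V, (keys.Nodup ∧ keys.toFinset = S.image ctr) ∧
      (keys.map Lc).flatten.head? = some a := by
  obtain ⟨keys, hkeys, hkeys_head⟩ := exists_nodup_toFinset_head (mem_image_of_mem ctr ha)
  obtain ⟨t, rfl⟩ := List.head?_eq_some_iff.1 hkeys_head
  obtain ⟨t', ht'⟩ := List.head?_eq_some_iff.1 hhead
  exact ⟨_, hkeys, by simp [ht']⟩

/-- Concatenating arrangements of the clusters keeps distances inside a cluster and stretches
every other pair by at most `√|S|`. -/
theorem stretch_flatten_le (hw : ∀ u v, 0 ≤ w u v) (hkeys : keys.Nodup)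
    (hkS : keys.toFinset = S.image ctr)
    (hLc : ∀ c ∈ keys, (Lc c).Nodup ∧ (Lc c).toFinset = {x ∈ S | ctr x = c}) :
    stretch w S (keys.map Lc).flatten ≤
      (∑ c ∈ S.image ctr, stretch w {x ∈ S | ctr x = c} (Lc c)) +
        √(#S : ℝ) * cutWeight w S ctr := by
  set L := (keys.map Lc).flatten
  have hL := nodup_toFinset_flatten_map hkeys hkS hLc
  have hlen : L.length = #S := by rw [← List.toFinset_card_of_nodup hL.1, hL.2]
  have hkey : ∀ x ∈ S, ctr x ∈ keys := fun x hx =>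
    List.mem_toFinset.1 (hkS ▸ mem_image_of_mem ctr hx)
  have hblock : ∀ x ∈ S, ∀ c ∈ keys, ctr x = c → x ∈ Lc c := fun x hx c hc h =>
    List.mem_toFinset.1 ((hLc c hc).2 ▸ mem_filter.2 ⟨hx, h⟩)
  have hpair : ∀ u ∈ S, ∀ v ∈ S, w u v * √|(L.idxOf u : ℝ) - L.idxOf v| ≤
      (if ctr u = ctr v then w u v * √|((Lc (ctr u)).idxOf u : ℝ) - (Lc (ctr u)).idxOf v| else 0) +
        (if ctr u = ctr v then 0 else w u v) * √(#S : ℝ) := by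
    intro u hu v hv
    split_ifs with h
    · obtain ⟨c, hc⟩ := List.exists_idxOf_flatten_eq_add
        (pairwise_disjoint_map hkeys fun c hc => (hLc c hc).2)
        (List.mem_map_of_mem (f := Lc) (hkey u hu))
      rw [hc u (hblock u hu _ (hkey u hu) rfl), hc v (hblock v hv _ (hkey u hu) h.symm)]
      simp only [Nat.cast_add, add_sub_add_left_eq_sub, zero_mul, add_zero, le_refl]
    · rw [zero_add, ← hlen]
      gcongr
      · exact hw u v
      · exact List.abs_idxOf_sub_idxOf_le (List.mem_toFinset.1 (hL.2 ▸ hu))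
          (List.mem_toFinset.1 (hL.2 ▸ hv))
  calc stretch w S L ≤ ∑ u ∈ S, ∑ v ∈ S, ((if ctr u = ctr v then
        w u v * √|((Lc (ctr u)).idxOf u : ℝ) - (Lc (ctr u)).idxOf v| else 0) +
        (if ctr u = ctr v then 0 else w u v) * √(#S : ℝ)) :=
        sum_le_sum fun u hu => sum_le_sum fun v hv => hpair u hu v hv
    _ = _ := by
      simp only [sum_add_distrib, sum_sum_ite_eq_sum_fiber, cutWeight, ← sum_mul]
      rw [mul_comm]
      congr 1
      refine sum_congr rfl fun c _ => sum_congr rfl fun u hu => ?_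
      rw [(mem_filter.1 hu).2]

end Arrangement

section Ordering

variable {V : Type*} [Fintype V] [DecidableEq V] {dist : V → V → ℝ} {w : V → V → ℝ}
  {S : Finset V}

theorem card_cluster_le (hd : IsMetric dist) (hs : Spreading2 dist) {ctr : V → V} {r : ℝ}
    (hctr : ∀ x, dist x (ctr x) ≤ r) (c : V) : (#{x ∈ S | ctr x = c} : ℝ) ≤ 16 * r ^ 2 + 1 := by
  have hsub : #{x ∈ S | ctr x = c} ≤ ballCard dist c r := card_le_card fun x hx => by
    simp only [mem_filter, mem_univ, true_and] at hx ⊢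
    rw [← hx.2, hd.symm]
    exact hctr x
  exact (Nat.cast_le.2 hsub).trans (ballCard_le hs hd.dist_self c ((hd.nonneg _ _).trans (hctr c)))

theorem stretch_le_of_card_le (hd : IsMetric dist) (hs : Spreading2 dist) (hw : ∀ u v, 0 ≤ w u v)
    {L : List V} (hL : L.Nodup ∧ L.toFinset = S) (hS : #S ≤ 256) :
    stretch w S L ≤ 96 * ∑ u ∈ S, ∑ v ∈ S, w u v * dist u v * potential dist u (√(#S : ℝ) / 8) := by
  rw [stretch, mul_sum]
  refine sum_le_sum fun u hu => ?_
  rw [mul_sum]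
  refine sum_le_sum fun v hv => ?_
  rcases eq_or_ne u v with rfl | huv
  · simp [hd.dist_self]
  have hmem : ∀ x ∈ S, x ∈ L := fun x hx => List.mem_toFinset.1 (hL.2 ▸ hx)
  have hsqrt : √|(L.idxOf u : ℝ) - L.idxOf v| ≤ 16 := by
    calc √|(L.idxOf u : ℝ) - L.idxOf v| ≤ √(L.length : ℝ) :=
          sqrt_le_sqrt (List.abs_idxOf_sub_idxOf_le (hmem u hu) (hmem v hv))
      _ ≤ √(16 ^ 2) := by
          rw [← List.toFinset_card_of_nodup hL.1, hL.2]
          gcongr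
          exact_mod_cast hS
      _ = 16 := sqrt_sq (by norm_num)
  have hd4 := hs.quarter_le_dist hd.dist_self huv
  have hΦ := one_le_potential (hd.dist_self u) (by positivity : 0 ≤ √(#S : ℝ) / 8)
  calc w u v * √|(L.idxOf u : ℝ) - L.idxOf v| ≤ w u v * (96 * dist u v * potential dist u _) := by
        gcongr
        · exact hw u v
        · nlinarith
    _ = _ := by ring

theorem sqrt_card_cluster_le (hd : IsMetric dist) (hs : Spreading2 dist) {ctr : V → V} {Δ : ℝ}
    (hΔ : 1 ≤ Δ) (hctr : ∀ x, dist x (ctr x) ≤ Δ / 2) (c : V) :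
    √(#{x ∈ S | ctr x = c} : ℝ) / 8 ≤ Δ / 3 := by
  have h := card_cluster_le (S := S) hd hs hctr c
  have : √(#{x ∈ S | ctr x = c} : ℝ) ≤ √((8 * Δ / 3) ^ 2) := sqrt_le_sqrt (by nlinarith)
  rw [sqrt_sq (by positivity)] at this
  linarith

/-- Cut pairs are charged `√|S| = 8Δ` and cluster pairs the potential at the cluster's scale,
which `levelCost_add_potential_le` trades for the current level's cost. -/
theorem stretch_flatten_le_potential (hd : IsMetric dist) (hw : ∀ u v, 0 ≤ w u v) {Δ : ℝ}
    (hΔ : 2 ≤ Δ) (hSΔ : √(#S : ℝ) = 8 * Δ) {ctr : V → V}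
    (hscale : ∀ c, √(#{x ∈ S | ctr x = c} : ℝ) / 8 ≤ Δ / 3)
    (hcut : cutWeight w S ctr * Δ ≤
      12 * ∑ u ∈ S, ∑ v ∈ S, w u v * dist u v * levelCost dist u Δ)
    {keys : List V} (hkeys : keys.Nodup) (hkS : keys.toFinset = S.image ctr) {Lc : V → List V}
    (hLc : ∀ c ∈ keys, ((Lc c).Nodup ∧ (Lc c).toFinset = {x ∈ S | ctr x = c}) ∧
      stretch w {x ∈ S | ctr x = c} (Lc c) ≤ 96 * ∑ u ∈ {x ∈ S | ctr x = c},
        ∑ v ∈ {x ∈ S | ctr x = c}, w u v * dist u v *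
          potential dist u (√(#{x ∈ S | ctr x = c} : ℝ) / 8)) :
    stretch w S (keys.map Lc).flatten ≤
      96 * ∑ u ∈ S, ∑ v ∈ S, w u v * dist u v * potential dist u Δ := by
  set g : V → V → ℝ := fun u v => w u v * dist u v * (potential dist u Δ - levelCost dist u Δ)
  have hgain : ∀ c u v, w u v * dist u v * potential dist u (√(#{x ∈ S | ctr x = c} : ℝ) / 8) ≤
      g u v := fun c u v => by
    have := levelCost_add_potential_le (hd.dist_self u) hΔ (by positivity) (hscale c)
    exact mul_le_mul_of_nonneg_left (by linarith) (mul_nonneg (hw u v) (hd.nonneg u v))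
  have hg : ∀ u v, 0 ≤ g u v := fun u v => by
    have := levelCost_add_potential_le (hd.dist_self u) hΔ le_rfl (by positivity)
    have := one_le_potential (hd.dist_self u) le_rfl
    exact mul_nonneg (mul_nonneg (hw u v) (hd.nonneg u v)) (by linarith)
  calc stretch w S (keys.map Lc).flatten
      ≤ (∑ c ∈ S.image ctr, stretch w {x ∈ S | ctr x = c} (Lc c)) + 8 * Δ * cutWeight w S ctr :=
        hSΔ ▸ stretch_flatten_le hw hkeys hkS fun c hc => (hLc c hc).1
    _ ≤ 96 * ∑ c ∈ S.image ctr, ∑ u ∈ {x ∈ S | ctr x = c}, ∑ v ∈ {x ∈ S | ctr x = c}, g u v +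
        96 * ∑ u ∈ S, ∑ v ∈ S, w u v * dist u v * levelCost dist u Δ := by
        rw [mul_sum]
        refine add_le_add (sum_le_sum fun c hc => ?_) (by linarith)
        have hc' : c ∈ keys := List.mem_toFinset.1 (hkS ▸ hc)
        exact (hLc c hc').2.trans (mul_le_mul_of_nonneg_left
          (sum_le_sum fun u _ => sum_le_sum fun v _ => hgain c u v) (by norm_num))
    _ ≤ 96 * ∑ u ∈ S, ∑ v ∈ S, g u v +
        96 * ∑ u ∈ S, ∑ v ∈ S, w u v * dist u v * levelCost dist u Δ := by
        gcongr
        exact sum_fiber_le S ctr hg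
    _ = _ := by
        rw [← mul_add]
        simp only [g, ← sum_add_distrib]
        congr 1
        exact sum_congr rfl fun u _ => sum_congr rfl fun v _ => by ring

theorem exists_arrangement (hd : IsMetric dist) (hs : Spreading2 dist) (hw : ∀ u v, 0 ≤ w u v)
    (S : Finset V) : ∀ a ∈ S, ∃ L : List V, (L.Nodup ∧ L.toFinset = S) ∧ L.head? = some a ∧
      stretch w S L ≤
        96 * ∑ u ∈ S, ∑ v ∈ S, w u v * dist u v * potential dist u (√(#S : ℝ) / 8) := by
  induction S using Finset.strongInduction with
  | H S ih =>
  intro a ha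
  by_cases hS : #S ≤ 256
  · obtain ⟨L, hL, hhead⟩ := exists_nodup_toFinset_head ha
    exact ⟨L, hL, hhead, stretch_le_of_card_le hd hs hw hL hS⟩
  have hΔ : 2 ≤ √(#S : ℝ) / 8 := by
    have : √(16 ^ 2) ≤ √(#S : ℝ) := sqrt_le_sqrt (by exact_mod_cast (not_le.1 hS).le)
    rw [sqrt_sq (by norm_num)] at this
    linarith
  obtain ⟨ctr, hctr, hcut⟩ := exists_clustering hd (fun u v => hs.quarter_le_dist hd.dist_self)
    hw S (by positivity : 0 < √(#S : ℝ) / 8)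
  have hscale := sqrt_card_cluster_le (S := S) hd hs (by linarith) hctr
  have hclusters : ∀ c ∈ S.image ctr, ∃ L : List V,
      ((L.Nodup ∧ L.toFinset = {x ∈ S | ctr x = c}) ∧ (c = ctr a → L.head? = some a)) ∧
      stretch w {x ∈ S | ctr x = c} L ≤ 96 * ∑ u ∈ {x ∈ S | ctr x = c},
        ∑ v ∈ {x ∈ S | ctr x = c}, w u v * dist u v *
          potential dist u (√(#{x ∈ S | ctr x = c} : ℝ) / 8) := by
    intro c hc
    have hsub : {x ∈ S | ctr x = c} ⊂ S := (filter_subset _ S).ssubset_of_ne fun h => by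
      have := hscale c
      rw [h] at this
      linarith
    by_cases hca : c = ctr a
    · obtain ⟨L, hL, hhead, hst⟩ := ih _ hsub a (mem_filter.2 ⟨ha, hca.symm⟩)
      exact ⟨L, ⟨hL, fun _ => hhead⟩, hst⟩
    · obtain ⟨x, hx, rfl⟩ := mem_image.1 hc
      obtain ⟨L, hL, -, hst⟩ := ih _ hsub x (mem_filter.2 ⟨hx, rfl⟩)
      exact ⟨L, ⟨hL, fun h => absurd h hca⟩, hst⟩
  choose! Lc hLc using hclusters
  obtain ⟨keys, ⟨hkeys, hkS⟩, hhead⟩ :=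
    exists_keys_head_flatten ha ((hLc _ (mem_image_of_mem ctr ha)).1.2 rfl)
  have hLc' : ∀ c ∈ keys, _ := fun c hc => hLc c (hkS ▸ List.mem_toFinset.2 hc)
  exact ⟨_, nodup_toFinset_flatten_map hkeys hkS fun c hc => (hLc' c hc).1.1, hhead,
    stretch_flatten_le_potential hd hw hΔ (by ring) hscale hcut hkeys hkS
      fun c hc => ⟨(hLc' c hc).1.1, (hLc' c hc).2⟩⟩

end Ordering

end RotterVygen

theorem ordering_lemma_dim_two :
    ∃ C : ℝ, 0 < C ∧
    ∀ (V : Type) [Fintype V] [DecidableEq V],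
    ∀ (w : V → V → ℝ) (dist : V → V → ℝ) (v₀ : V),
      2 ≤ Fintype.card V →
      (∀ u v, w u v = w v u) → (∀ u v, 0 ≤ w u v) → (∀ v, w v v = 0) →
      IsMetric dist →
      Spreading2 dist →
      ∃ q : V → ℕ, Function.Injective q ∧ (∀ v, q v < Fintype.card V) ∧ q v₀ = 0 ∧
        (∑ u, ∑ v, w u v * Real.sqrt |(q u : ℝ) - (q v : ℝ)|) / 2 ≤
          C * Real.log (Fintype.card V) * ((∑ u, ∑ v, w u v * dist u v) / 2) := by
  refine ⟨480, by norm_num, fun V _ _ w dist v₀ hn _ hw _ hd hs => ?_⟩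
  obtain ⟨L, ⟨hnodup, hL⟩, hhead, hstretch⟩ :=
    RotterVygen.exists_arrangement hd hs hw univ v₀ (mem_univ v₀)
  have hmem : ∀ v, v ∈ L := fun v => List.mem_toFinset.1 (hL ▸ mem_univ v)
  have hlen : L.length = Fintype.card V := by
    rw [← List.toFinset_card_of_nodup hnodup, hL, card_univ]
  obtain ⟨t, rfl⟩ := List.head?_eq_some_iff.1 hhead
  refine ⟨(v₀ :: t).idxOf, fun x y h => (List.idxOf_inj (hmem x)).1 h,
    fun v => hlen ▸ List.idxOf_lt_length_iff.2 (hmem v), List.idxOf_cons_self, ?_⟩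
  rw [card_univ] at hstretch
  have := RotterVygen.sum_mul_potential_le hd hw hn
  unfold RotterVygen.stretch at hstretch
  linarith
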